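/- For every positive integer n and every real y > 0, the function s ↦ (πny/6)^{−1/4}·W(πny/6, s) is differentiable at s = 3/4 and its derivative there equals 4π·e^{−πny/12}·α(ny/6). -/

import Mathlib

/-!
Write `C = πny/6` and `u = s - 1/4`. Splitting `(1+t)^(u-1/2) = 1 + ((1+t)^(u-1/2) - 1)` in the
integral defining `W(C, s)`, the first part integrates to `Γ(u) C^(-u)`, which cancels the
prefactor, so `C^(-1/4) W(C, s) = e^(-C/2) (1 + C^u / Γ(u) · D(u))` with
`D(u) = ∫₀^∞ e^(-Ct) t^(u-1) ((1+t)^(u-1/2) - 1) dt`. As `D(1/2) = 0`, only `D'(1/2)` contributes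
at `s = 3/4`, and `Γ(1/2) = √π` turns the derivative into `e^(-C/2) √(C/π) D'(1/2)`. The difference
quotients `D(u) / (u - 1/2)` converge to `∫₀^∞ e^(-Ct) t^(-1/2) log(1+t) dt` by dominated
convergence, since `|(1+t)^h - 1| ≤ |h| t (1+t)` for `|h| ≤ 1`.
-/

open Real MeasureTheory

/-- The Whittaker function `W_{1/4, s-1/2}(y)` for `y > 0`, given by the integral
representation `W(y,s) = (y^s e^{−y/2}/Γ(s−1/4)) ∫_0^∞ e^{−yt} t^{s−5/4} (1+t)^{s−3/4} dt`. -/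
noncomputable def Wfun (y s : ℝ) : ℝ :=
  y ^ s * Real.exp (-y / 2) / Real.Gamma (s - 1 / 4) *
    ∫ t in Set.Ioi (0 : ℝ), Real.exp (-y * t) * t ^ (s - 5 / 4) * (1 + t) ^ (s - 3 / 4)

/-- `α(y) = (√y/(4π)) ∫_0^∞ e^{−πyt} t^{−1/2} log(1+t) dt`. -/
noncomputable def alphaFun (y : ℝ) : ℝ :=
  Real.sqrt y / (4 * Real.pi) *
    ∫ t in Set.Ioi (0 : ℝ), Real.exp (-(Real.pi * y * t)) * t ^ (-(1 / 2) : ℝ) * Real.log (1 + t)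

open Set Filter Topology

lemma abs_exp_sub_one_le_abs_mul_exp_abs (x : ℝ) : |exp x - 1| ≤ |x| * exp |x| := by
  rcases le_or_gt 0 x with hx | hx
  · rw [abs_of_nonneg hx, abs_of_nonneg (by linarith [one_le_exp hx])]
    have h : 1 - x ≤ exp (-x) := by linarith [add_one_le_exp (-x)]
    have h' : exp (-x) * exp x = 1 := by rw [← exp_add, neg_add_cancel, exp_zero]
    nlinarith [exp_pos x]
  · rw [abs_of_neg hx, abs_of_nonpos (by linarith [exp_lt_one_iff.mpr hx])]
    nlinarith [add_one_le_exp x, one_le_exp (neg_nonneg.mpr hx.le)]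

lemma abs_one_add_rpow_sub_one_le {t h : ℝ} (ht : 0 ≤ t) (hh : |h| ≤ 1) :
    |(1 + t) ^ h - 1| ≤ |h| * (t * (1 + t)) := by
  have hL : 0 ≤ log (1 + t) := log_nonneg (by linarith)
  have hLt : log (1 + t) ≤ t := by linarith [log_le_sub_one_of_pos (by linarith : 0 < 1 + t)]
  have hx : |log (1 + t) * h| ≤ |h| * log (1 + t) := by
    rw [abs_mul, abs_of_nonneg hL, mul_comm]
  have hexp : exp |log (1 + t) * h| ≤ 1 + t := by
    calc exp |log (1 + t) * h| ≤ exp (log (1 + t)) :=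
          exp_le_exp.mpr (hx.trans (by nlinarith [abs_nonneg h]))
      _ = 1 + t := exp_log (by linarith)
  rw [rpow_def_of_pos (by linarith)]
  calc |exp (log (1 + t) * h) - 1| ≤ |log (1 + t) * h| * exp |log (1 + t) * h| :=
        abs_exp_sub_one_le_abs_mul_exp_abs _
    _ ≤ (|h| * t) * (1 + t) :=
        mul_le_mul (hx.trans (mul_le_mul_of_nonneg_left hLt (abs_nonneg h))) hexp
          (exp_nonneg _) (by positivity)
    _ = |h| * (t * (1 + t)) := by ring

lemma rpow_le_rpow_add_rpow {t a b p : ℝ} (ht : 0 < t) (hap : a ≤ p) (hpb : p ≤ b) :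
    t ^ p ≤ t ^ a + t ^ b := by
  rcases le_total 1 t with h | h
  · linarith [rpow_le_rpow_of_exponent_le h hpb, rpow_pos_of_pos ht a]
  · linarith [rpow_le_rpow_of_exponent_ge ht h hap, rpow_pos_of_pos ht b]

lemma integrableOn_exp_neg_mul_mul_rpow {c p : ℝ} (hc : 0 < c) (hp : -1 < p) :
    IntegrableOn (fun t : ℝ => exp (-c * t) * t ^ p) (Ioi 0) := by
  refine (integrableOn_rpow_mul_exp_neg_mul_rpow hp zero_lt_one hc).congr_fun
    (fun t _ => ?_) measurableSet_Ioi
  simp only [rpow_one, mul_comm]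

lemma integral_exp_neg_mul_mul_rpow_sub_one {c u : ℝ} (hc : 0 < c) (hu : 0 < u) :
    ∫ t in Ioi (0 : ℝ), exp (-c * t) * t ^ (u - 1) = (1 / c) ^ u * Gamma u := by
  rw [← integral_rpow_mul_exp_neg_mul_Ioi hu hc]
  simp only [neg_mul, mul_comm (exp _)]

noncomputable def gammaDefect (C σ u : ℝ) : ℝ :=
  ∫ t in Ioi 0, exp (-C * t) * t ^ (u - 1) * ((1 + t) ^ (u - σ) - 1)

noncomputable def gammaDefectMajorant (C σ t : ℝ) : ℝ :=
  2 * (exp (-C * t) * t ^ (σ / 2) + exp (-C * t) * t ^ (σ + 2))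

section GammaDefect

variable {C σ : ℝ}

lemma gammaDefect_self : gammaDefect C σ σ = 0 := by
  simp [gammaDefect]

lemma abs_gammaDefect_integrand_le {u t : ℝ} (ht : 0 < t) (hu : |u - σ| ≤ min 1 (σ / 2)) :
    |exp (-C * t) * t ^ (u - 1) * ((1 + t) ^ (u - σ) - 1)|
      ≤ |u - σ| * gammaDefectMajorant C σ t := by
  obtain ⟨hu1, hu2⟩ := le_min_iff.mp hu
  have hlo : σ / 2 ≤ u := by linarith [neg_abs_le (u - σ)]
  have hhi : u ≤ σ + 1 := by linarith [le_abs_self (u - σ)]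
  have hpow : t ^ (u - 1) * (t * (1 + t)) = t ^ u + t ^ (u + 1) := by
    rw [rpow_add ht, rpow_sub_one ht.ne', rpow_one]
    field_simp
  calc |exp (-C * t) * t ^ (u - 1) * ((1 + t) ^ (u - σ) - 1)|
      = exp (-C * t) * t ^ (u - 1) * |(1 + t) ^ (u - σ) - 1| := by
        rw [abs_mul, abs_of_nonneg (by positivity)]
    _ ≤ exp (-C * t) * t ^ (u - 1) * (|u - σ| * (t * (1 + t))) :=
        mul_le_mul_of_nonneg_left (abs_one_add_rpow_sub_one_le ht.le hu1) (by positivity)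
    _ = |u - σ| * (exp (-C * t) * (t ^ u + t ^ (u + 1))) := by rw [← hpow]; ring
    _ ≤ |u - σ| * (exp (-C * t) * (2 * (t ^ (σ / 2) + t ^ (σ + 2)))) := by
        gcongr
        linarith [rpow_le_rpow_add_rpow ht hlo (by linarith : u ≤ σ + 2),
          rpow_le_rpow_add_rpow ht (by linarith : σ / 2 ≤ u + 1) (by linarith : u + 1 ≤ σ + 2)]
    _ = |u - σ| * gammaDefectMajorant C σ t := by rw [gammaDefectMajorant]; ring

lemma aestronglyMeasurable_gammaDefect_integrand {u : ℝ} :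
    AEStronglyMeasurable (fun t : ℝ => exp (-C * t) * t ^ (u - 1) * ((1 + t) ^ (u - σ) - 1))
      (volume.restrict (Ioi 0)) :=
  (by fun_prop : Measurable fun t : ℝ =>
    exp (-C * t) * t ^ (u - 1) * ((1 + t) ^ (u - σ) - 1)).aestronglyMeasurable

lemma integrableOn_gammaDefectMajorant (hC : 0 < C) (hσ : 0 < σ) :
    IntegrableOn (gammaDefectMajorant C σ) (Ioi 0) :=
  ((integrableOn_exp_neg_mul_mul_rpow hC (by linarith)).add
    (integrableOn_exp_neg_mul_mul_rpow hC (by linarith))).const_mul 2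

lemma integrableOn_gammaDefect_integrand (hC : 0 < C) (hσ : 0 < σ) {u : ℝ}
    (hu : |u - σ| ≤ min 1 (σ / 2)) :
    IntegrableOn (fun t : ℝ => exp (-C * t) * t ^ (u - 1) * ((1 + t) ^ (u - σ) - 1)) (Ioi 0) := by
  refine Integrable.mono' ((integrableOn_gammaDefectMajorant hC hσ).const_mul |u - σ|)
    aestronglyMeasurable_gammaDefect_integrand ?_
  filter_upwards [ae_restrict_mem measurableSet_Ioi] with t ht
  exact abs_gammaDefect_integrand_le ht hu

lemma tendsto_slope_gammaDefect_integrand {t : ℝ} (ht : 0 < t) :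
    Tendsto (fun u => (u - σ)⁻¹ * (exp (-C * t) * t ^ (u - 1) * ((1 + t) ^ (u - σ) - 1)))
      (𝓝[≠] σ) (𝓝 (exp (-C * t) * t ^ (σ - 1) * log (1 + t))) := by
  have hfactor : Tendsto (fun u => exp (-C * t) * t ^ (u - 1)) (𝓝[≠] σ)
      (𝓝 (exp (-C * t) * t ^ (σ - 1))) :=
    ((continuous_const.mul (continuous_const.rpow (continuous_id.sub continuous_const)
      fun _ => Or.inl ht.ne')).tendsto σ).mono_left nhdsWithin_le_nhds
  have hderiv : HasDerivAt (fun u => (1 + t) ^ (u - σ)) (log (1 + t)) σ := by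
    simpa using ((hasStrictDerivAt_const_rpow (by linarith) (σ - σ)).hasDerivAt).comp_sub_const σ σ
  have hslope := hasDerivAt_iff_tendsto_slope.mp hderiv
  refine (hfactor.mul hslope).congr fun u => ?_
  simp only [slope_def_field, sub_self, rpow_zero]
  ring

lemma hasDerivAt_gammaDefect (hC : 0 < C) (hσ : 0 < σ) :
    HasDerivAt (gammaDefect C σ) (∫ t in Ioi 0, exp (-C * t) * t ^ (σ - 1) * log (1 + t)) σ := by
  have hslope : slope (gammaDefect C σ) σ = fun u =>
      ∫ t in Ioi 0, (u - σ)⁻¹ * (exp (-C * t) * t ^ (u - 1) * ((1 + t) ^ (u - σ) - 1)) := by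
    ext u
    rw [slope_def_field, gammaDefect_self, sub_zero, div_eq_inv_mul, gammaDefect,
      integral_const_mul]
  have hnear : ∀ᶠ u in 𝓝[≠] σ, |u - σ| ≤ min 1 (σ / 2) :=
    nhdsWithin_le_nhds (Metric.closedBall_mem_nhds σ (by positivity))
  rw [hasDerivAt_iff_tendsto_slope, hslope]
  refine tendsto_integral_filter_of_dominated_convergence (gammaDefectMajorant C σ)
    (.of_forall fun u => aestronglyMeasurable_gammaDefect_integrand.const_mul _)
    ?_ (integrableOn_gammaDefectMajorant hC hσ) ?_
  · filter_upwards [hnear, self_mem_nhdsWithin] with u hu hne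
    filter_upwards [ae_restrict_mem measurableSet_Ioi] with t ht
    rw [norm_mul, norm_inv, Real.norm_eq_abs, Real.norm_eq_abs,
      inv_mul_le_iff₀ (abs_pos.mpr (sub_ne_zero.mpr hne))]
    exact abs_gammaDefect_integrand_le ht hu
  · filter_upwards [ae_restrict_mem measurableSet_Ioi] with t ht
    exact tendsto_slope_gammaDefect_integrand ht

lemma integral_exp_neg_mul_mul_rpow_mul_one_add_rpow (hC : 0 < C) (hσ : 0 < σ) {u : ℝ}
    (hu : |u - σ| ≤ min 1 (σ / 2)) :
    ∫ t in Ioi 0, exp (-C * t) * t ^ (u - 1) * (1 + t) ^ (u - σ)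
      = (1 / C) ^ u * Gamma u + gammaDefect C σ u := by
  have hu0 : 0 < u := by linarith [neg_abs_le (u - σ), min_le_right 1 (σ / 2)]
  rw [gammaDefect, ← integral_exp_neg_mul_mul_rpow_sub_one hC hu0,
    ← integral_add (integrableOn_exp_neg_mul_mul_rpow hC (by linarith))
      (integrableOn_gammaDefect_integrand hC hσ hu)]
  congr with t
  ring

end GammaDefect

lemma rpow_neg_quarter_mul_Wfun_eq {C s : ℝ} (hC : 0 < C) (hs : |s - 3 / 4| ≤ 1 / 4) :
    C ^ (-(1 / 4) : ℝ) * Wfun C s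
      = exp (-C / 2) *
        (1 + C ^ (s - 1 / 4) / Gamma (s - 1 / 4) * gammaDefect C (1 / 2) (s - 1 / 4)) := by
  have hint := integral_exp_neg_mul_mul_rpow_mul_one_add_rpow hC one_half_pos (u := s - 1 / 4)
    (by rw [show s - 1 / 4 - 1 / 2 = s - 3 / 4 by ring,
      show min (1 : ℝ) (1 / 2 / 2) = 1 / 4 by norm_num]; exact hs)
  rw [show s - 1 / 4 - 1 = s - 5 / 4 by ring, show s - 1 / 4 - 1 / 2 = s - 3 / 4 by ring] at hint
  have hG : Gamma (s - 1 / 4) ≠ 0 := (Gamma_pos_of_pos (by linarith [neg_abs_le (s - 3 / 4)])).ne'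
  have hpow : C ^ (-(1 / 4) : ℝ) * C ^ s = C ^ (s - 1 / 4) := by
    rw [← rpow_add hC]; ring_nf
  have hinv : (1 / C) ^ (s - 1 / 4) = (C ^ (s - 1 / 4))⁻¹ := by rw [one_div, inv_rpow hC.le]
  rw [Wfun, hint, hinv, ← hpow]
  generalize Gamma (s - 1 / 4) = G at hG ⊢
  field_simp

lemma hasDerivAt_rpow_neg_quarter_mul_Wfun {C : ℝ} (hC : 0 < C) :
    HasDerivAt (fun s => C ^ (-(1 / 4) : ℝ) * Wfun C s)
      (exp (-C / 2) * (√(C / π) * ∫ t in Ioi 0, exp (-C * t) * t ^ (-(1 / 2) : ℝ) * log (1 + t)))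
      (3 / 4) := by
  have hW : (fun s => C ^ (-(1 / 4) : ℝ) * Wfun C s) =ᶠ[𝓝 (3 / 4)] fun s =>
      exp (-C / 2) *
        (1 + C ^ (s - 1 / 4) / Gamma (s - 1 / 4) * gammaDefect C (1 / 2) (s - 1 / 4)) := by
    filter_upwards [Metric.closedBall_mem_nhds (3 / 4 : ℝ) (by norm_num : (0 : ℝ) < 1 / 4)]
      with s hs
    exact rpow_neg_quarter_mul_Wfun_eq hC hs
  have hquot : DifferentiableAt ℝ (fun s => C ^ (s - 1 / 4) / Gamma (s - 1 / 4)) (3 / 4) := by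
    refine DifferentiableAt.div ?_ ?_ (Gamma_pos_of_pos (by norm_num)).ne'
    · exact (differentiableAt_const C).rpow (differentiableAt_id.sub_const _) hC.ne'
    · refine (differentiableAt_Gamma fun m => ?_).comp _ (differentiableAt_id.sub_const _)
      have := m.cast_nonneg (α := ℝ)
      norm_num
      linarith
  have hD : HasDerivAt (fun s => gammaDefect C (1 / 2) (s - 1 / 4))
      (∫ t in Ioi 0, exp (-C * t) * t ^ (-(1 / 2) : ℝ) * log (1 + t)) (3 / 4) := by
    have h := hasDerivAt_gammaDefect hC (one_half_pos (α := ℝ))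
    rw [show (1 / 2 : ℝ) - 1 = -(1 / 2) by norm_num] at h
    exact HasDerivAt.comp_sub_const _ _ (by rwa [show (3 / 4 : ℝ) - 1 / 4 = 1 / 2 by norm_num])
  rw [hW.hasDerivAt_iff]
  refine (((hquot.hasDerivAt.mul hD).const_add 1).const_mul (exp (-C / 2))).congr_deriv ?_
  rw [show (3 / 4 : ℝ) - 1 / 4 = 1 / 2 by norm_num, gammaDefect_self, Gamma_one_half_eq,
    sqrt_div' _ pi_pos.le, ← sqrt_eq_rpow]
  ring

theorem whittaker_deriv_at_three_quarters (n : ℕ) (hn : 1 ≤ n) (y : ℝ) (hy : 0 < y) :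
    HasDerivAt
      (fun s : ℝ => (Real.pi * n * y / 6) ^ (-(1 / 4) : ℝ) * Wfun (Real.pi * n * y / 6) s)
      (4 * Real.pi * Real.exp (-(Real.pi * n * y / 12)) * alphaFun (n * y / 6))
      (3 / 4) := by
  have hn' : (0 : ℝ) < n := Nat.cast_pos.mpr hn
  convert hasDerivAt_rpow_neg_quarter_mul_Wfun (by positivity : 0 < π * n * y / 6) using 1
  have hexp : ∀ t : ℝ, -(π * (n * y / 6) * t) = -(π * n * y / 6) * t := fun t => by ring
  rw [alphaFun, show π * n * y / 6 / π = n * y / 6 by field_simp,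
    show -(π * n * y / 12) = -(π * n * y / 6) / 2 by ring]
  simp_rw [hexp]
  field_simp
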